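/- arXiv:2511.13870 — 6 statements merged into one kernel-verified Lean document; each statement's English description precedes it below -/
import Mathlib

section
/- Consider the closed-loop stochastic recursion x(k+1) = (A + B K C(k)) x(k) with deterministic initial condition x(0) = x₀ ∈ ℝⁿ, where C(k) = Diag(c₁(k)/p₁, …, cₙ(k)/pₙ) and the family (cᵢ(k))_{k∈ℕ, 1≤i≤n} consists of mutually independent Bernoulli random variables with parameters pᵢ ∈ (0,1]. If every (complex) eigenvalue of A + B K has modulus strictly less than 1, then the expected state converges to zero: E[x(k)] → 0 as k → ∞, for every initial condition x₀ ∈ ℝⁿ. -/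
/-!
Write `M = A + B K`. The state `x(k)` is a function of the inputs `c(l)` with `l < k` only, so
it is independent of `C(k)`, whose mean is the identity; taking expectations in the recursion
gives `E[x(k+1)] = A E[x(k)] + B K E[C(k)] E[x(k)] = M E[x(k)]`, i.e. `E[x(k)] = M^k x₀`.
By Gelfand's formula `‖M^k‖^(1/k)` tends to the spectral radius of `M`, which is `< 1`, so
`M^k → 0`.
-/

open MeasureTheory ProbabilityTheory Matrix Filter
open scoped Topology

theorem tendsto_pow_atTop_nhds_zero_of_spectralRadius_lt_one {A : Type*} [NormedRing A]
    [NormedAlgebra ℂ A] [CompleteSpace A] {a : A} (ha : spectralRadius ℂ a < 1) :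
    Tendsto (a ^ ·) atTop (𝓝 0) := by
  obtain ⟨r, hρr, hr1⟩ := ENNReal.lt_iff_exists_nnreal_btwn.1 ha
  have hbound : ∀ᶠ k : ℕ in atTop, ‖a ^ k‖₊ ≤ r ^ k := by
    filter_upwards [(spectrum.pow_nnnorm_pow_one_div_tendsto_nhds_spectralRadius a)
      |>.eventually_lt_const hρr, eventually_gt_atTop 0] with k hk hk0
    rw [one_div, ENNReal.rpow_inv_lt_iff (by positivity), ENNReal.rpow_natCast] at hk
    exact_mod_cast hk.le
  refine squeeze_zero_norm' ?_
    (tendsto_pow_atTop_nhds_zero_of_lt_one r.coe_nonneg (by exact_mod_cast hr1))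
  filter_upwards [hbound] with k hk
  exact_mod_cast hk

theorem Matrix.tendsto_pow_atTop_nhds_zero_of_spectrum_norm_lt_one {ι : Type*} [Fintype ι]
    [DecidableEq ι] {M : Matrix ι ι ℝ}
    (hM : ∀ z ∈ spectrum ℂ (M.map Complex.ofReal), ‖z‖ < 1) :
    Tendsto (M ^ ·) atTop (𝓝 0) := by
  let _ := Matrix.linftyOpNormedRing (n := ι) (α := ℂ)
  let _ := Matrix.linftyOpNormedAlgebra (n := ι) (α := ℂ) (R := ℂ)
  have : CompleteSpace (Matrix ι ι ℂ) := FiniteDimensional.complete ℂ _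
  rcases isEmpty_or_nonempty ι with _ | _
  · exact tendsto_const_nhds.congr fun k => Subsingleton.elim _ _
  have hρ : spectralRadius ℂ (M.map Complex.ofReal) < 1 := by
    obtain ⟨z, hz, hzρ⟩ := spectrum.exists_nnnorm_eq_spectralRadius (M.map Complex.ofReal)
    rw [← hzρ]
    exact_mod_cast hM z hz
  have hre : Continuous fun N : Matrix ι ι ℂ => N.map Complex.re :=
    continuous_id.matrix_map Complex.continuous_re
  have hpow := (hre.tendsto 0).comp (tendsto_pow_atTop_nhds_zero_of_spectralRadius_lt_one hρ)
  convert hpow using 2 with k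
  · have hmap : M.map Complex.ofReal ^ k = (M ^ k).map Complex.ofReal :=
      (map_pow Complex.ofRealHom.mapMatrix M k).symm
    simp [hmap, Matrix.map_map, Function.comp_def]
  · simp

section Integration

variable {Ω : Type*} [MeasurableSpace Ω] {μ : Measure Ω}

theorem integral_eq_of_eq_zero_or_eq_one {f : Ω → ℝ} (hf : Measurable f)
    (h01 : ∀ ω, f ω = 0 ∨ f ω = 1) {q : ℝ} (hq : 0 ≤ q)
    (hμ : μ {ω | f ω = 1} = ENNReal.ofReal q) : ∫ ω, f ω ∂μ = q := by
  have hf_eq : f = (f ⁻¹' {1}).indicator 1 := by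
    funext ω
    rcases h01 ω with h | h <;> simp [h]
  rw [hf_eq, integral_indicator_one (hf (measurableSet_singleton 1)), measureReal_def]
  exact (congrArg ENNReal.toReal hμ).trans (ENNReal.toReal_ofReal hq)

theorem ProbabilityTheory.IndepFun.integral_div_mul_eq {f X : Ω → ℝ} (hfX : IndepFun f X μ)
    (hf : AEStronglyMeasurable f μ) (hX : AEStronglyMeasurable X μ) {q : ℝ}
    (hq : ∫ ω, f ω ∂μ = q) (hq0 : q ≠ 0) : ∫ ω, f ω / q * X ω ∂μ = ∫ ω, X ω ∂μ := by
  simp_rw [div_mul_eq_mul_div]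
  rw [integral_div, hfX.integral_fun_mul_eq_mul_integral hf hX, hq, mul_div_cancel_left₀ _ hq0]

variable {ι κ : Type*} [Fintype ι] {v : Ω → ι → ℝ}

theorem integrable_mulVec_apply (hv : ∀ j, Integrable (fun ω => v ω j) μ) (M : Matrix κ ι ℝ)
    (i : κ) : Integrable (fun ω => (M *ᵥ v ω) i) μ := by
  simp only [mulVec, dotProduct]
  exact integrable_finsetSum _ fun j _ => (hv j).const_mul _

theorem integral_mulVec_apply (hv : ∀ j, Integrable (fun ω => v ω j) μ) (M : Matrix κ ι ℝ)
    (i : κ) : ∫ ω, (M *ᵥ v ω) i ∂μ = (M *ᵥ fun j => ∫ ω, v ω j ∂μ) i := by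
  simp only [mulVec, dotProduct]
  rw [integral_finsetSum _ fun j _ => (hv j).const_mul _]
  simp_rw [integral_const_mul]

end Integration

section PastSigma

variable {Ω ι : Type*} {c : ℕ → ι → Ω → ℝ}

abbrev pastSigma (c : ℕ → ι → Ω → ℝ) (k : ℕ) : MeasurableSpace Ω :=
  ⨆ q ∈ {q : ℕ × ι | q.1 < k}, MeasurableSpace.comap (c q.1 q.2) Real.measurableSpace

theorem pastSigma_mono : Monotone (pastSigma c) :=
  fun _ _ hkl => biSup_mono fun _ hq => lt_of_lt_of_le hq hkl

theorem measurable_pastSigma_succ (k : ℕ) (i : ι) : Measurable[pastSigma c (k + 1)] (c k i) :=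
  Measurable.of_comap_le <| le_iSup₂ (f := fun q (_ : q ∈ {q : ℕ × ι | q.1 < k + 1}) =>
    MeasurableSpace.comap (c q.1 q.2) Real.measurableSpace) (k, i) (Nat.lt_succ_self k)

theorem indepFun_of_measurable_pastSigma [MeasurableSpace Ω] {μ : Measure Ω}
    (hmeas : ∀ k i, Measurable (c k i)) (hindep : iIndepFun (fun (q : ℕ × ι) ω => c q.1 q.2 ω) μ)
    {β : Type*} [MeasurableSpace β] {f : Ω → β} {k : ℕ} (hf : Measurable[pastSigma c k] f)
    (j : ι) : IndepFun (c k j) f μ := by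
  have hST : Disjoint ({(k, j)} : Set (ℕ × ι)) {q | q.1 < k} := by simp
  have := indep_iSup_of_disjoint (fun q => (hmeas q.1 q.2).comap_le) hindep.iIndep hST
  rw [IndepFun_iff_Indep]
  exact indep_of_indep_of_le_right (indep_of_indep_of_le_left this
    (le_iSup₂ (f := fun q (_ : q ∈ ({(k, j)} : Set (ℕ × ι))) =>
      MeasurableSpace.comap (c q.1 q.2) Real.measurableSpace) (k, j) rfl)) hf.comap_le

end PastSigma

section SparsifiedFeedback

variable {Ω ι : Type*} [Fintype ι] [DecidableEq ι]
  {A N : Matrix ι ι ℝ} {p : ι → ℝ} {c : ℕ → ι → Ω → ℝ} {x₀ : ι → ℝ} {x : ℕ → Ω → ι → ℝ}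

noncomputable def sparsificationMatrix (p : ι → ℝ) (c : ℕ → ι → Ω → ℝ) (k : ℕ) (ω : Ω) :
    Matrix ι ι ℝ :=
  diagonal fun i => c k i ω / p i

theorem sparsificationMatrix_mulVec_apply (k : ℕ) (ω : Ω) (v : ι → ℝ) (i : ι) :
    (sparsificationMatrix p c k ω *ᵥ v) i = c k i ω / p i * v i :=
  mulVec_diagonal _ _ _

theorem measurable_pastSigma_state (hx0 : ∀ ω, x 0 ω = x₀)
    (hx : ∀ k ω, x (k + 1) ω = (A + N * sparsificationMatrix p c k ω) *ᵥ x k ω) (k : ℕ) :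
    Measurable[pastSigma c k] (x k) := by
  induction k with
  | zero => simpa only [funext hx0] using measurable_const
  | succ k ih =>
    let G : (ι → ℝ) × (ι → ℝ) → ι → ℝ := fun vw =>
      (A + N * diagonal fun i => vw.1 i / p i) *ᵥ vw.2
    have hG : Continuous G := by fun_prop
    have hc : Measurable[pastSigma c (k + 1)] fun ω i => c k i ω :=
      @measurable_pi_lambda Ω ι (fun _ => ℝ) (pastSigma c (k + 1)) _ _
        fun i => measurable_pastSigma_succ k i
    have hx' : x (k + 1) = G ∘ fun ω => (fun i => c k i ω, x k ω) := funext (hx k)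
    rw [hx']
    exact hG.measurable.comp (hc.prodMk (ih.mono (pastSigma_mono k.le_succ) le_rfl))

variable [MeasurableSpace Ω] {μ : Measure Ω}

theorem integrable_sparsificationMatrix_mulVec_apply (hmeas : ∀ k i, Measurable (c k i))
    (h01 : ∀ k i ω, c k i ω = 0 ∨ c k i ω = 1) {v : Ω → ι → ℝ}
    (hv : ∀ j, Integrable (fun ω => v ω j) μ) (k : ℕ) (i : ι) :
    Integrable (fun ω => (sparsificationMatrix p c k ω *ᵥ v ω) i) μ := by
  simp only [sparsificationMatrix_mulVec_apply]
  refine (hv i).bdd_mul ((hmeas k i).div_const _).aestronglyMeasurable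
    (ae_of_all _ fun ω => ?_) (c := |p i|⁻¹)
  rw [Real.norm_eq_abs, abs_div, ← one_div]
  gcongr
  rcases h01 k i ω with h | h <;> simp [h]

theorem integrable_state [IsFiniteMeasure μ] (hmeas : ∀ k i, Measurable (c k i))
    (h01 : ∀ k i ω, c k i ω = 0 ∨ c k i ω = 1) (hx0 : ∀ ω, x 0 ω = x₀)
    (hx : ∀ k ω, x (k + 1) ω = (A + N * sparsificationMatrix p c k ω) *ᵥ x k ω) (k : ℕ) (j : ι) :
    Integrable (fun ω => x k ω j) μ := by
  induction k generalizing j with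
  | zero => simpa only [hx0] using integrable_const _
  | succ k ih =>
    simp only [hx, add_mulVec, ← mulVec_mulVec, Pi.add_apply]
    exact (integrable_mulVec_apply ih A j).add (integrable_mulVec_apply
      (integrable_sparsificationMatrix_mulVec_apply hmeas h01 ih k) N j)

theorem integral_state_succ [IsFiniteMeasure μ] (hp : ∀ i, 0 < p i)
    (hmeas : ∀ k i, Measurable (c k i)) (h01 : ∀ k i ω, c k i ω = 0 ∨ c k i ω = 1)
    (hber : ∀ k i, μ {ω | c k i ω = 1} = ENNReal.ofReal (p i))
    (hindep : iIndepFun (fun (q : ℕ × ι) ω => c q.1 q.2 ω) μ) (hx0 : ∀ ω, x 0 ω = x₀)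
    (hx : ∀ k ω, x (k + 1) ω = (A + N * sparsificationMatrix p c k ω) *ᵥ x k ω) (k : ℕ) :
    (fun i => ∫ ω, x (k + 1) ω i ∂μ) = (A + N) *ᵥ fun i => ∫ ω, x k ω i ∂μ := by
  have hint := integrable_state (μ := μ) hmeas h01 hx0 hx k
  have hCint := integrable_sparsificationMatrix_mulVec_apply (p := p) hmeas h01 hint k
  have hCx : (fun i => ∫ ω, (sparsificationMatrix p c k ω *ᵥ x k ω) i ∂μ) =
      fun i => ∫ ω, x k ω i ∂μ := by
    funext i
    simp only [sparsificationMatrix_mulVec_apply]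
    exact (indepFun_of_measurable_pastSigma hmeas hindep
      ((measurable_pi_apply i).comp (measurable_pastSigma_state hx0 hx k)) i).integral_div_mul_eq
      (hmeas k i).aestronglyMeasurable (hint i).1
      (integral_eq_of_eq_zero_or_eq_one (hmeas k i) (h01 k i) (hp i).le (hber k i)) (hp i).ne'
  funext i
  simp only [hx, add_mulVec, ← mulVec_mulVec, Pi.add_apply]
  rw [integral_add (integrable_mulVec_apply hint A i) (integrable_mulVec_apply hCint N i),
    integral_mulVec_apply hint, integral_mulVec_apply hCint, hCx, ← Pi.add_apply, ← add_mulVec]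

theorem integral_state_eq_pow_mulVec [IsProbabilityMeasure μ] (hp : ∀ i, 0 < p i)
    (hmeas : ∀ k i, Measurable (c k i)) (h01 : ∀ k i ω, c k i ω = 0 ∨ c k i ω = 1)
    (hber : ∀ k i, μ {ω | c k i ω = 1} = ENNReal.ofReal (p i))
    (hindep : iIndepFun (fun (q : ℕ × ι) ω => c q.1 q.2 ω) μ) (hx0 : ∀ ω, x 0 ω = x₀)
    (hx : ∀ k ω, x (k + 1) ω = (A + N * sparsificationMatrix p c k ω) *ᵥ x k ω) (k : ℕ) :
    (fun i => ∫ ω, x k ω i ∂μ) = (A + N) ^ k *ᵥ x₀ := by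
  induction k with
  | zero => simp [hx0]
  | succ k ih =>
    rw [integral_state_succ hp hmeas h01 hber hindep hx0 hx, ih, pow_succ', mulVec_mulVec]

end SparsifiedFeedback

/-- For the closed-loop stochastic recursion
`x(k+1) = (A + B K C(k)) x(k)` with `C(k) = Diag(c₁(k)/p₁, …, cₙ(k)/pₙ)` built from
mutually independent Bernoulli random variables with parameters `pᵢ ∈ (0,1]`,
if every complex eigenvalue of `A + B K` has modulus strictly less than `1`, then the
expected state converges to zero, for every initial condition `x₀ ∈ ℝⁿ`. -/
theorem expected_state_tendsto_zero
    {n m : ℕ} (A : Matrix (Fin n) (Fin n) ℝ) (B : Matrix (Fin n) (Fin m) ℝ)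
    (K : Matrix (Fin m) (Fin n) ℝ)
    {Ω : Type*} [MeasurableSpace Ω] (μ : Measure Ω) [IsProbabilityMeasure μ]
    (p : Fin n → ℝ) (hp : ∀ i, p i ∈ Set.Ioc (0 : ℝ) 1)
    (c : ℕ → Fin n → Ω → ℝ)
    (hmeas : ∀ k i, Measurable (c k i))
    (h01 : ∀ k i ω, c k i ω = 0 ∨ c k i ω = 1)
    (hber : ∀ k i, μ {ω | c k i ω = 1} = ENNReal.ofReal (p i))
    (hindep : iIndepFun
      (fun (ki : ℕ × Fin n) ω => c ki.1 ki.2 ω) μ)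
    (hspec : ∀ z ∈ spectrum ℂ ((A + B * K).map (Complex.ofReal)), ‖z‖ < 1)
    (x₀ : Fin n → ℝ) (x : ℕ → Ω → Fin n → ℝ)
    (hx0 : ∀ ω, x 0 ω = x₀)
    (hxrec : ∀ k ω, x (k + 1) ω =
      (A + B * K * Matrix.diagonal (fun i => c k i ω / p i)).mulVec (x k ω)) :
    Tendsto (fun k => (fun i => ∫ ω, x k ω i ∂μ)) atTop (nhds 0) := by
  refine Tendsto.congr (fun k => (integral_state_eq_pow_mulVec (fun i => (hp i).1) hmeas h01 hber
    hindep hx0 hxrec k).symm) ?_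
  have hmulVec : Continuous fun M : Matrix (Fin n) (Fin n) ℝ => M *ᵥ x₀ := by fun_prop
  simpa [Function.comp_def] using
    (hmulVec.tendsto 0).comp (tendsto_pow_atTop_nhds_zero_of_spectrum_norm_lt_one hspec)
end

section
/- Let c₁, …, cₙ be mutually independent Bernoulli random variables, cᵢ taking value 1 with probability pᵢ ∈ (0,1] and 0 otherwise, and let C := Diag(c₁/p₁, …, cₙ/pₙ). Then for any matrix L ∈ ℝ^{n×n}, the expectation of Cᵀ Lᵀ L C equals Lᵀ L + Diag(s₁(1−p₁)/p₁, …, sₙ(1−pₙ)/pₙ), where sᵢ := Σ_{k=1}^{n} L_{k,i}² is the i-th diagonal entry of Lᵀ L. -/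
open MeasureTheory ProbabilityTheory Matrix

/-! Writing `C = Diag(c/p)`, the `(i, j)` entry of `Cᵀ (Lᵀ L) C` is `(Lᵀ L)ᵢⱼ cᵢ cⱼ / (pᵢ pⱼ)`.
Off the diagonal, independence gives `E[cᵢ cⱼ] = pᵢ pⱼ`, so the entry has mean `(Lᵀ L)ᵢⱼ`; on the
diagonal, `cᵢ² = cᵢ` gives `E[cᵢ²] = pᵢ`, so the entry has mean `sᵢ / pᵢ = sᵢ + sᵢ (1 - pᵢ) / pᵢ`. -/

namespace Matrix

variable {n α : Type*} [Fintype n]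

theorem diagonal_mul_mul_diagonal_apply [DecidableEq n] [NonUnitalSemiring α]
    (d e : n → α) (A : Matrix n n α) (i j : n) :
    (diagonal d * A * diagonal e) i j = d i * A i j * e j := by
  rw [mul_diagonal, diagonal_mul]

theorem transpose_mul_self_apply_self [Semiring α] (A : Matrix n n α) (i : n) :
    (Aᵀ * A) i i = ∑ k, A k i ^ 2 := by
  simp only [mul_apply, transpose_apply, sq]

end Matrix

section ZeroOneValued

variable {Ω : Type*} {f : Ω → ℝ}

theorem eq_indicator_one_of_zero_or_one (h01 : ∀ ω, f ω = 0 ∨ f ω = 1) :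
    f = {ω | f ω = 1}.indicator 1 := by
  funext ω
  rcases h01 ω with h | h <;> simp [h]

theorem mul_self_eq_of_zero_or_one (h01 : ∀ ω, f ω = 0 ∨ f ω = 1) : f * f = f := by
  funext ω
  rcases h01 ω with h | h <;> simp [h]

theorem integral_eq_measureReal_of_zero_or_one [MeasurableSpace Ω] {μ : Measure Ω}
    (hf : Measurable f) (h01 : ∀ ω, f ω = 0 ∨ f ω = 1) :
    ∫ ω, f ω ∂μ = μ.real {ω | f ω = 1} := by
  conv_lhs => rw [eq_indicator_one_of_zero_or_one h01]
  exact integral_indicator_one (hf (measurableSet_singleton 1))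

end ZeroOneValued

theorem expectation_sparsifier_quadratic_general
    {n : ℕ} (L : Matrix (Fin n) (Fin n) ℝ)
    {Ω : Type*} [MeasurableSpace Ω] (μ : Measure Ω)
    (p : Fin n → ℝ) (hp : ∀ i, p i ∈ Set.Ioc (0 : ℝ) 1)
    (c : Fin n → Ω → ℝ)
    (hmeas : ∀ i, Measurable (c i))
    (h01 : ∀ i ω, c i ω = 0 ∨ c i ω = 1)
    (hber : ∀ i, μ {ω | c i ω = 1} = ENNReal.ofReal (p i))
    (hindep : iIndepFun c μ) :
    ∀ i j, (∫ ω, ((Matrix.diagonal (fun i => c i ω / p i))ᵀ * Lᵀ * L *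
        Matrix.diagonal (fun i => c i ω / p i)) i j ∂μ) =
      (Lᵀ * L + Matrix.diagonal
        (fun i => (∑ k, (L k i) ^ 2) * (1 - p i) / p i)) i j := by
  intro i j
  have hmean : ∀ k, ∫ ω, c k ω ∂μ = p k := fun k => by
    rw [integral_eq_measureReal_of_zero_or_one (hmeas k) (h01 k), measureReal_def, hber k,
      ENNReal.toReal_ofReal (hp k).1.le]
  have hentry : ∀ ω, ((diagonal fun i => c i ω / p i)ᵀ * Lᵀ * L *
      diagonal fun i => c i ω / p i) i j = (Lᵀ * L) i j / (p i * p j) * (c i * c j) ω := by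
    intro ω
    rw [diagonal_transpose, Matrix.mul_assoc _ Lᵀ L, diagonal_mul_mul_diagonal_apply,
      Pi.mul_apply]
    ring
  simp_rw [hentry, integral_const_mul]
  have hpi := (hp i).1
  rcases eq_or_ne i j with rfl | hij
  · rw [mul_self_eq_of_zero_or_one (h01 i), hmean, Matrix.add_apply, diagonal_apply_eq,
      transpose_mul_self_apply_self]
    field_simp
    ring
  · have hpj := (hp j).1
    rw [(hindep.indepFun hij).integral_mul_eq_mul_integral (hmeas i).aestronglyMeasurable
      (hmeas j).aestronglyMeasurable, hmean, hmean, Matrix.add_apply, diagonal_apply_ne _ hij,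
      add_zero]
    field_simp

/-- If `c₁, …, cₙ` are mutually independent Bernoulli random variables
with parameters `pᵢ ∈ (0,1]` and `C := Diag(c₁/p₁, …, cₙ/pₙ)`, then for any `L ∈ ℝ^{n×n}`,
`E[Cᵀ Lᵀ L C] = Lᵀ L + Diag(s₁(1−p₁)/p₁, …, sₙ(1−pₙ)/pₙ)` where
`sᵢ := Σₖ L_{k,i}²` is the `i`-th diagonal entry of `Lᵀ L`. -/
theorem expectation_sparsifier_quadratic
    {n : ℕ} (L : Matrix (Fin n) (Fin n) ℝ)
    {Ω : Type*} [MeasurableSpace Ω] (μ : Measure Ω) [IsProbabilityMeasure μ]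
    (p : Fin n → ℝ) (hp : ∀ i, p i ∈ Set.Ioc (0 : ℝ) 1)
    (c : Fin n → Ω → ℝ)
    (hmeas : ∀ i, Measurable (c i))
    (h01 : ∀ i ω, c i ω = 0 ∨ c i ω = 1)
    (hber : ∀ i, μ {ω | c i ω = 1} = ENNReal.ofReal (p i))
    (hindep : iIndepFun c μ) :
    ∀ i j, (∫ ω, ((Matrix.diagonal (fun i => c i ω / p i))ᵀ * Lᵀ * L *
        Matrix.diagonal (fun i => c i ω / p i)) i j ∂μ) =
      (Lᵀ * L + Matrix.diagonal
        (fun i => (∑ k, (L k i) ^ 2) * (1 - p i) / p i)) i j :=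
  expectation_sparsifier_quadratic_general L μ p hp c hmeas h01 hber hindep
end

section
/- Let p ∈ (0,1] and let c₁, …, cₙ be mutually independent Bernoulli random variables, each taking value 1 with probability p and 0 otherwise, and let C := Diag(c₁/p, …, cₙ/p). Let M := A + B K C (a random matrix), D := A + B K, and L := B K. Then E[Mᵀ M] = Dᵀ D + ((1−p)/p) · Diag(Lᵀ L), where Diag(Lᵀ L) denotes the diagonal matrix whose diagonal coincides with that of Lᵀ L. -/
open MeasureTheory ProbabilityTheory Matrix

/-!
Write `d i = c i / p`. The `(i, j)` entry of `Mᵀ M = (A + L Diag d)ᵀ (A + L Diag d)` is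
affine in `d i`, `d j` and `d i * d j`, so its expectation only involves the first two moments
of `d`. These are `E[d i] = 1`, `E[d i d j] = 1` for `i ≠ j` by independence, and
`E[d i ^ 2] = 1 / p` because `c i ^ 2 = c i`: the weights are uncorrelated with variance
`(1 - p) / p`, which is exactly the extra `((1 - p) / p) • Diag(Lᵀ L)` on top of the Gram matrix
of `A + L`.
-/

section Gram

variable {ι κ : Type*} [Fintype ι] [Fintype κ] [DecidableEq ι]

lemma gram_add_mul_diagonal_apply (A L : Matrix κ ι ℝ) (d : ι → ℝ) (i j : ι) :
    ((A + L * diagonal d)ᵀ * (A + L * diagonal d)) i j =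
      (Aᵀ * A) i j + (Aᵀ * L) i j * d j + (Lᵀ * A) i j * d i +
        (Lᵀ * L) i j * (d i * d j) := by
  have hexp : (A + L * diagonal d)ᵀ * (A + L * diagonal d) =
      Aᵀ * A + Aᵀ * L * diagonal d + diagonal d * (Lᵀ * A) +
        diagonal d * (Lᵀ * L) * diagonal d := by
    simp only [transpose_add, transpose_mul, diagonal_transpose, Matrix.add_mul, Matrix.mul_add,
      Matrix.mul_assoc]
    abel
  rw [hexp]
  simp only [Matrix.add_apply, mul_diagonal, diagonal_mul]
  ring

lemma gram_add_apply (A L : Matrix κ ι ℝ) (i j : ι) :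
    ((A + L)ᵀ * (A + L)) i j =
      (Aᵀ * A) i j + (Aᵀ * L) i j + (Lᵀ * A) i j + (Lᵀ * L) i j := by
  simpa using gram_add_mul_diagonal_apply A L 1 i j

theorem integral_gram_add_mul_diagonal_apply {Ω : Type*} [MeasurableSpace Ω] {μ : Measure Ω}
    [IsProbabilityMeasure μ] (A L : Matrix κ ι ℝ) (d : ι → Ω → ℝ) (s : ℝ)
    (hd : ∀ i, Integrable (d i) μ) (hdd : ∀ i j, Integrable (fun ω => d i ω * d j ω) μ)
    (hmean : ∀ i, ∫ ω, d i ω ∂μ = 1)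
    (hmom : ∀ i j, ∫ ω, d i ω * d j ω ∂μ = 1 + if i = j then s else 0) (i j : ι) :
    ∫ ω, ((A + L * diagonal (fun k => d k ω))ᵀ * (A + L * diagonal (fun k => d k ω))) i j
        ∂μ =
      ((A + L)ᵀ * (A + L) + s • diagonal (fun k => (Lᵀ * L) k k)) i j := by
  simp_rw [gram_add_mul_diagonal_apply]
  rw [integral_add, integral_add, integral_add, integral_const, integral_const_mul,
    integral_const_mul, integral_const_mul, hmean, hmean, hmom]
  · rw [Matrix.add_apply, Matrix.smul_apply, diagonal_apply, gram_add_apply, probReal_univ,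
      one_smul]
    split_ifs with hij
    · subst hij; simp only [smul_eq_mul]; ring
    · simp only [smul_zero]; ring
  all_goals fun_prop

end Gram

section ZeroOne

variable {Ω : Type*} [MeasurableSpace Ω] {μ : Measure Ω}

lemma integrable_of_forall_eq_zero_or_one [IsFiniteMeasure μ] {X : Ω → ℝ} (hX : Measurable X)
    (h01 : ∀ ω, X ω = 0 ∨ X ω = 1) : Integrable X μ :=
  .of_bound hX.aestronglyMeasurable 1 <| .of_forall fun ω => by
    rcases h01 ω with h | h <;> simp [h]

lemma integral_eq_measureReal_of_forall_eq_zero_or_one {X : Ω → ℝ} (hX : Measurable X)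
    (h01 : ∀ ω, X ω = 0 ∨ X ω = 1) : ∫ ω, X ω ∂μ = μ.real {ω | X ω = 1} := by
  have hX_ind : ∀ ω, X ω = {ω | X ω = 1}.indicator 1 ω := fun ω => by
    rcases h01 ω with h | h <;> simp [h]
  rw [integral_congr_ae (.of_forall hX_ind)]
  exact integral_indicator_one (hX (measurableSet_singleton 1))

variable {ι : Type*} {c : ι → Ω → ℝ} {p : ℝ}

lemma integral_eq_of_bernoulli (hp : 0 ≤ p) (hc : ∀ i, Measurable (c i))
    (h01 : ∀ i ω, c i ω = 0 ∨ c i ω = 1)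
    (hber : ∀ i, μ {ω | c i ω = 1} = ENNReal.ofReal p)
    (i : ι) : ∫ ω, c i ω ∂μ = p := by
  rw [integral_eq_measureReal_of_forall_eq_zero_or_one (hc i) (h01 i), measureReal_def, hber,
    ENNReal.toReal_ofReal hp]

lemma integral_mul_eq_of_bernoulli [DecidableEq ι] (hp : 0 ≤ p) (hc : ∀ i, Measurable (c i))
    (h01 : ∀ i ω, c i ω = 0 ∨ c i ω = 1)
    (hber : ∀ i, μ {ω | c i ω = 1} = ENNReal.ofReal p)
    (hindep : iIndepFun c μ) (i j : ι) :
    ∫ ω, c i ω * c j ω ∂μ = if i = j then p else p * p := by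
  split_ifs with hij
  · subst hij
    have hsq : (fun ω => c i ω * c i ω) = c i :=
      funext fun ω => by rcases h01 i ω with h | h <;> simp [h]
    rw [hsq, integral_eq_of_bernoulli hp hc h01 hber]
  · rw [(hindep.indepFun hij).integral_fun_mul_eq_mul_integral (hc i).aestronglyMeasurable
      (hc j).aestronglyMeasurable, integral_eq_of_bernoulli hp hc h01 hber,
      integral_eq_of_bernoulli hp hc h01 hber]

end ZeroOne

/-- If `c₁, …, cₙ` are mutually independent Bernoulli(`p`) random
variables, `C := Diag(c₁/p, …, cₙ/p)`, `M := A + B K C`, `D := A + B K`, `L := B K`,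
then `E[Mᵀ M] = Dᵀ D + ((1−p)/p) · Diag(Lᵀ L)`. -/
theorem expectation_closed_loop_gram
    {n m : ℕ} (A : Matrix (Fin n) (Fin n) ℝ) (B : Matrix (Fin n) (Fin m) ℝ)
    (K : Matrix (Fin m) (Fin n) ℝ)
    {Ω : Type*} [MeasurableSpace Ω] (μ : Measure Ω) [IsProbabilityMeasure μ]
    (p : ℝ) (hp : p ∈ Set.Ioc (0 : ℝ) 1)
    (c : Fin n → Ω → ℝ)
    (hmeas : ∀ i, Measurable (c i))
    (h01 : ∀ i ω, c i ω = 0 ∨ c i ω = 1)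
    (hber : ∀ i, μ {ω | c i ω = 1} = ENNReal.ofReal p)
    (hindep : iIndepFun c μ) :
    ∀ i j, (∫ ω, ((A + B * K * Matrix.diagonal (fun i => c i ω / p))ᵀ *
        (A + B * K * Matrix.diagonal (fun i => c i ω / p))) i j ∂μ) =
      ((A + B * K)ᵀ * (A + B * K) + ((1 - p) / p) •
        Matrix.diagonal (fun i => ((B * K)ᵀ * (B * K)) i i)) i j := by
  have hp0 : p ≠ 0 := hp.1.ne'
  have hc (i : Fin n) : Integrable (c i) μ :=
    integrable_of_forall_eq_zero_or_one (hmeas i) (h01 i)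
  have hcc (i j : Fin n) : Integrable (fun ω => c i ω * c j ω) μ :=
    integrable_of_forall_eq_zero_or_one ((hmeas i).mul (hmeas j)) fun ω => by
      rcases h01 i ω with h | h <;> simp [h, h01 j ω]
  refine integral_gram_add_mul_diagonal_apply A (B * K) (fun i ω => c i ω / p) ((1 - p) / p)
    (fun i => (hc i).div_const p) (fun i j => ?_) (fun i => ?_) (fun i j => ?_)
  · simp_rw [div_mul_div_comm]
    exact (hcc i j).div_const _
  · rw [integral_div, integral_eq_of_bernoulli hp.1.le hmeas h01 hber, div_self hp0]
  · simp_rw [div_mul_div_comm]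
    rw [integral_div, integral_mul_eq_of_bernoulli hp.1.le hmeas h01 hber hindep]
    split_ifs <;> field_simp <;> ring
end

section
/- Consider the closed-loop stochastic recursion x(k+1) = (A + B K C(k)) x(k) with deterministic initial condition x(0) = x₀ ∈ ℝⁿ, where C(k) = Diag(c₁(k)/p, …, cₙ(k)/p) and the family (cᵢ(k))_{k∈ℕ, 1≤i≤n} consists of mutually independent Bernoulli random variables each with parameter p ∈ (0,1]. Let f(p) := ‖(A+BK)ᵀ(A+BK) + ((1−p)/p) · Diag((BK)ᵀ(BK))‖₂. If f(p) < 1, then E[‖x(k)‖²] ≤ f(p)^k · ‖x₀‖² for all k ∈ ℕ, and in particular E[‖x(k)‖²] → 0 as k → ∞ for every initial condition x₀ (asymptotic mean-square stability). -/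
/-!
`x(k)` depends only on the gains `C(0), …, C(k-1)`, so it is independent of `C(k)` and
`E‖x(k+1)‖² = E[x(k)ᵀ M x(k)]` with `M = E[(A + BKC(k))ᵀ(A + BKC(k))]`. Since `E[C(k)] = I` and
`E[C(k) S C(k)] = S + ((1-p)/p) Diag(S)`, this `M` is exactly the matrix whose spectral norm is
`f(p)`, so `E‖x(k+1)‖² ≤ f(p) E‖x(k)‖²`; iterating gives the geometric decay.
-/

open MeasureTheory ProbabilityTheory Matrix Filter Set

noncomputable def specNorm {n : ℕ} (M : Matrix (Fin n) (Fin n) ℝ) : ℝ :=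
  ‖LinearMap.toContinuousLinearMap (Matrix.toEuclideanLin M)‖

lemma dotProduct_mulVec_le_specNorm_mul {n : ℕ} (M : Matrix (Fin n) (Fin n) ℝ) (v : Fin n → ℝ) :
    v ⬝ᵥ M *ᵥ v ≤ specNorm M * ∑ i, v i ^ 2 := by
  set u := WithLp.toLp 2 v
  have hquad : v ⬝ᵥ M *ᵥ v = inner ℝ u (toEuclideanLin M u) := by
    simp [u, PiLp.inner_apply, dotProduct, mul_comm]
  have hnorm : ∑ i, v i ^ 2 = ‖u‖ ^ 2 := by
    simp [u, EuclideanSpace.norm_sq_eq]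
  calc v ⬝ᵥ M *ᵥ v ≤ ‖u‖ * ‖toEuclideanLin M u‖ := hquad ▸ real_inner_le_norm _ _
    _ ≤ ‖u‖ * (specNorm M * ‖u‖) :=
      mul_le_mul_of_nonneg_left ((toEuclideanLin M).toContinuousLinearMap.le_opNorm u)
        (norm_nonneg _)
    _ = specNorm M * ∑ i, v i ^ 2 := by rw [hnorm]; ring

lemma sum_sq_mulVec {ι : Type*} [Fintype ι] (N : Matrix ι ι ℝ) (v : ι → ℝ) :
    ∑ i, (N *ᵥ v) i ^ 2 = v ⬝ᵥ (Nᵀ * N) *ᵥ v := by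
  rw [← mulVec_mulVec, dotProduct_mulVec, vecMul_transpose]
  simp [dotProduct, sq]

lemma dotProduct_mulVec_eq_sum {ι : Type*} [Fintype ι] (M : Matrix ι ι ℝ) (v : ι → ℝ) :
    v ⬝ᵥ M *ᵥ v = ∑ a, ∑ b, M a b * (v a * v b) := by
  simp only [dotProduct, mulVec, Finset.mul_sum]
  exact Finset.sum_congr rfl fun a _ => Finset.sum_congr rfl fun b _ => by ring

lemma finite_range_of_zero_or_one {Ω ι : Type*} [Finite ι] {c : ι → Ω → ℝ}
    (h01 : ∀ i ω, c i ω = 0 ∨ c i ω = 1) : (range fun ω i => c i ω).Finite :=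
  (Finite.pi fun _ => toFinite {0, 1}).subset <|
    range_subset_iff.2 fun ω => mem_univ_pi.2 fun i => h01 i ω

section Recursion

variable {Ω ι E β : Type*} [MeasurableSpace E] {c : ℕ → ι → Ω → E}

abbrev generatedBy (c : ℕ → ι → Ω → E) (s : Set (ℕ × ι)) : MeasurableSpace Ω :=
  ⨆ q ∈ s, MeasurableSpace.comap (c q.1 q.2) inferInstance

lemma measurable_generatedBy_row {s : Set (ℕ × ι)} {k : ℕ} (hs : ∀ i, (k, i) ∈ s) :
    Measurable[generatedBy c s] fun ω i => c k i ω :=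
  @measurable_pi_lambda _ _ _ (generatedBy c s) _ _ fun i => Measurable.of_comap_le <|
    le_iSup₂ (f := fun q (_ : q ∈ s) => MeasurableSpace.comap (c q.1 q.2) inferInstance)
      (k, i) (hs i)

variable [MeasurableSpace β] {x : ℕ → Ω → β} {F : ℕ → (ι → E) → β → β} {x₀ : β}

lemma measurable_generatedBy_past (hF : ∀ k, Measurable fun q : (ι → E) × β => F k q.1 q.2)
    (h0 : ∀ ω, x 0 ω = x₀) (hrec : ∀ k ω, x (k + 1) ω = F k (fun i => c k i ω) (x k ω))
    (k : ℕ) : Measurable[generatedBy c {q | q.1 < k}] (x k) := by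
  induction k with
  | zero => simp [funext h0, measurable_const]
  | succ k ih =>
    have hmono : generatedBy c {q | q.1 < k} ≤ generatedBy c {q | q.1 < k + 1} :=
      biSup_mono fun q (hq : q.1 < k) => Nat.lt_succ_of_lt hq
    rw [funext (hrec k)]
    exact (hF k).comp ((measurable_generatedBy_row fun i => Nat.lt_succ_self k).prodMk
      (ih.mono hmono le_rfl))

lemma indepFun_of_recursion [MeasurableSpace Ω] {μ : Measure Ω} (hc : ∀ k i, Measurable (c k i))
    (hindep : iIndepFun (fun q : ℕ × ι => c q.1 q.2) μ)
    (hF : ∀ k, Measurable fun q : (ι → E) × β => F k q.1 q.2)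
    (h0 : ∀ ω, x 0 ω = x₀) (hrec : ∀ k ω, x (k + 1) ω = F k (fun i => c k i ω) (x k ω))
    (k : ℕ) : IndepFun (fun ω i => c k i ω) (x k) μ := by
  have hdisj : Disjoint {q : ℕ × ι | q.1 = k} {q | q.1 < k} :=
    disjoint_left.2 fun q (h : q.1 = k) (h' : q.1 < k) => h'.ne h
  have hsplit : Indep (generatedBy c {q | q.1 = k}) (generatedBy c {q | q.1 < k}) μ :=
    indep_iSup_of_disjoint (m := fun q : ℕ × ι => MeasurableSpace.comap (c q.1 q.2) inferInstance)
      (fun q => (hc q.1 q.2).comap_le) hindep.iIndep hdisj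
  exact (IndepFun_iff_Indep _ _ _).2 <| indep_of_indep_of_le hsplit
    (measurable_generatedBy_row fun _ => rfl).comap_le
    (measurable_generatedBy_past hF h0 hrec k).comap_le

lemma measurable_of_recursion [MeasurableSpace Ω] (hc : ∀ k i, Measurable (c k i))
    (hF : ∀ k, Measurable fun q : (ι → E) × β => F k q.1 q.2)
    (h0 : ∀ ω, x 0 ω = x₀) (hrec : ∀ k ω, x (k + 1) ω = F k (fun i => c k i ω) (x k ω))
    (k : ℕ) : Measurable (x k) :=
  (measurable_generatedBy_past hF h0 hrec k).mono
    (iSup₂_le fun q _ => (hc q.1 q.2).comap_le) le_rfl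

omit [MeasurableSpace E] [MeasurableSpace β] in
lemma finite_range_of_recursion (hc : ∀ k, (range fun ω i => c k i ω).Finite)
    (h0 : ∀ ω, x 0 ω = x₀) (hrec : ∀ k ω, x (k + 1) ω = F k (fun i => c k i ω) (x k ω))
    (k : ℕ) : (range (x k)).Finite := by
  induction k with
  | zero => exact (finite_singleton x₀).subset (range_subset_singleton.2 (funext h0))
  | succ k ih =>
    refine ((hc k).prod ih |>.image fun q => F k q.1 q.2).subset ?_
    rintro _ ⟨ω, rfl⟩
    exact ⟨_, mk_mem_prod (mem_range_self ω) (mem_range_self ω), (hrec k ω).symm⟩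

end Recursion

section Integration

variable {Ω : Type*} [MeasurableSpace Ω] {μ : Measure Ω}

-- Every random variable below takes finitely many values, which settles all integrability.
lemma integrable_comp_of_finite_range [IsFiniteMeasure μ] {β : Type*} [MeasurableSpace β]
    {X : Ω → β} (hX : Measurable X) (hfin : (range X).Finite) {g : β → ℝ} (hg : Measurable g) :
    Integrable (fun ω => g (X ω)) μ := by
  obtain ⟨C, hC⟩ := (range_comp g X ▸ hfin.image g).isBounded.exists_norm_le
  exact .of_bound (hg.comp hX).aestronglyMeasurable C
    (ae_of_all _ fun ω => hC _ (mem_range_self ω))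

lemma integral_dotProduct_mulVec_of_indepFun [IsFiniteMeasure μ] {ι E : Type*} [Fintype ι]
    [MeasurableSpace E] {ξ : Ω → E} {v : Ω → ι → ℝ} (hind : IndepFun ξ v μ)
    (hξ : Measurable ξ) (hξfin : (range ξ).Finite) (hv : Measurable v) (hvfin : (range v).Finite)
    {Q : E → Matrix ι ι ℝ} (hQ : ∀ a b, Measurable fun e => Q e a b) :
    ∫ ω, v ω ⬝ᵥ Q (ξ ω) *ᵥ v ω ∂μ =
      ∫ ω, v ω ⬝ᵥ (of fun a b => ∫ ω', Q (ξ ω') a b ∂μ) *ᵥ v ω ∂μ := by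
  have hvv (a b : ι) : Integrable (fun ω => v ω a * v ω b) μ :=
    integrable_comp_of_finite_range hv hvfin (by fun_prop : Measurable fun w : ι → ℝ => w a * w b)
  have hQξ (a b : ι) : Integrable (fun ω => Q (ξ ω) a b) μ :=
    integrable_comp_of_finite_range hξ hξfin (hQ a b)
  have hentry (a b : ι) : IndepFun (fun ω => Q (ξ ω) a b) (fun ω => v ω a * v ω b) μ :=
    hind.comp (hQ a b) (by fun_prop : Measurable fun w : ι → ℝ => w a * w b)
  have hprod (a b : ι) : Integrable (fun ω => Q (ξ ω) a b * (v ω a * v ω b)) μ :=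
    (hentry a b).integrable_mul (hQξ a b) (hvv a b)
  simp only [dotProduct_mulVec_eq_sum, of_apply]
  rw [integral_finsetSum _ fun a _ => integrable_finsetSum _ fun b _ => hprod a b,
    integral_finsetSum _ fun a _ => integrable_finsetSum _ fun b _ => (hvv a b).const_mul _]
  refine Finset.sum_congr rfl fun a _ => ?_
  rw [integral_finsetSum _ fun b _ => hprod a b,
    integral_finsetSum _ fun b _ => (hvv a b).const_mul _]
  refine Finset.sum_congr rfl fun b _ => ?_
  rw [integral_const_mul]
  exact (hentry a b).integral_fun_mul_eq_mul_integral (hQξ a b).1 (hvv a b).1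

lemma transpose_mul_self_add_mul_diagonal_apply {κ ι : Type*} [Fintype κ] [Fintype ι]
    [DecidableEq ι] (A G : Matrix κ ι ℝ) (d : ι → ℝ) (a b : ι) :
    ((A + G * diagonal d)ᵀ * (A + G * diagonal d)) a b =
      (Aᵀ * A) a b + d b * (Aᵀ * G) a b + d a * (Gᵀ * A) a b + d a * d b * (Gᵀ * G) a b := by
  have hexpand : (A + G * diagonal d)ᵀ * (A + G * diagonal d) = Aᵀ * A + Aᵀ * G * diagonal d +
      diagonal d * (Gᵀ * A) + diagonal d * (Gᵀ * G) * diagonal d := by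
    simp only [transpose_add, transpose_mul, diagonal_transpose, Matrix.add_mul, Matrix.mul_add,
      Matrix.mul_assoc]
    abel
  simp only [hexpand, Matrix.add_apply, mul_diagonal, diagonal_mul]
  ring

lemma integral_transpose_mul_self_add_mul_diagonal_apply [IsProbabilityMeasure μ] {κ ι : Type*}
    [Fintype κ] [Fintype ι] [DecidableEq ι] (A G : Matrix κ ι ℝ) (s : ℝ) {d : Ω → ι → ℝ}
    (hd : Measurable d) (hdfin : (range d).Finite) (hmean : ∀ a, ∫ ω, d ω a ∂μ = 1)
    (hcov : ∀ a b, ∫ ω, d ω a * d ω b ∂μ = 1 + if a = b then s else 0) (a b : ι) :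
    ∫ ω, ((A + G * diagonal (d ω))ᵀ * (A + G * diagonal (d ω))) a b ∂μ =
      ((A + G)ᵀ * (A + G) + s • diagonal fun i => (Gᵀ * G) i i) a b := by
  have hd1 (a : ι) : Integrable (fun ω => d ω a) μ :=
    integrable_comp_of_finite_range hd hdfin (measurable_pi_apply a)
  have hd2 (a b : ι) : Integrable (fun ω => d ω a * d ω b) μ :=
    integrable_comp_of_finite_range hd hdfin (by fun_prop : Measurable fun w : ι → ℝ => w a * w b)
  simp only [transpose_mul_self_add_mul_diagonal_apply]
  rw [integral_add, integral_add, integral_add]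
  · simp only [integral_const, integral_mul_const, hmean, hcov, probReal_univ, one_mul, add_mul,
      Matrix.add_apply, Matrix.smul_apply, diagonal_apply, transpose_add, Matrix.add_mul,
      Matrix.mul_add, smul_eq_mul]
    split_ifs with hab
    · subst hab; ring
    · ring
  all_goals fun_prop

lemma integral_sum_sq_mulVec_le [IsFiniteMeasure μ] {n : ℕ} {E : Type*} [MeasurableSpace E]
    {ξ : Ω → E} {v : Ω → Fin n → ℝ} (hind : IndepFun ξ v μ) (hξ : Measurable ξ)
    (hξfin : (range ξ).Finite) (hv : Measurable v) (hvfin : (range v).Finite)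
    {N : E → Matrix (Fin n) (Fin n) ℝ} (hN : ∀ a b, Measurable fun e => ((N e)ᵀ * N e) a b)
    {M : Matrix (Fin n) (Fin n) ℝ} (hM : ∀ a b, ∫ ω, ((N (ξ ω))ᵀ * N (ξ ω)) a b ∂μ = M a b) :
    ∫ ω, ∑ i, (N (ξ ω) *ᵥ v ω) i ^ 2 ∂μ ≤ specNorm M * ∫ ω, ∑ i, v ω i ^ 2 ∂μ := by
  have hmean : (of fun a b => ∫ ω, ((N (ξ ω))ᵀ * N (ξ ω)) a b ∂μ) = M := ext hM
  simp only [sum_sq_mulVec]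
  rw [integral_dotProduct_mulVec_of_indepFun hind hξ hξfin hv hvfin hN, hmean,
    ← integral_const_mul]
  exact integral_mono
    (integrable_comp_of_finite_range hv hvfin (by fun_prop : Measurable fun w => w ⬝ᵥ M *ᵥ w))
    (integrable_comp_of_finite_range hv hvfin
      (by fun_prop : Measurable fun w : Fin n → ℝ => specNorm M * ∑ i, w i ^ 2))
    fun ω => dotProduct_mulVec_le_specNorm_mul M (v ω)

lemma integral_div_eq_one_of_bernoulli {b : Ω → ℝ} (hb : Measurable b)
    (h01 : ∀ ω, b ω = 0 ∨ b ω = 1) {p : ℝ} (hp : 0 < p)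
    (hber : μ {ω | b ω = 1} = ENNReal.ofReal p) : ∫ ω, b ω / p ∂μ = 1 := by
  have hind : b = {ω | b ω = 1}.indicator 1 := by
    ext ω
    rcases h01 ω with h | h <;> simp [h]
  have hs : MeasurableSet {ω | b ω = 1} := hb (measurableSet_singleton 1)
  rw [integral_div, hind, integral_indicator_one hs, measureReal_def, hber,
    ENNReal.toReal_ofReal hp.le, div_self hp.ne']

lemma integral_div_mul_div_of_bernoulli {ι : Type*} [DecidableEq ι] {c : ι → Ω → ℝ}
    (hc : ∀ i, Measurable (c i)) (h01 : ∀ i ω, c i ω = 0 ∨ c i ω = 1) {p : ℝ} (hp : 0 < p)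
    (hber : ∀ i, μ {ω | c i ω = 1} = ENNReal.ofReal p)
    (hindep : Pairwise fun a b => IndepFun (c a) (c b) μ) (a b : ι) :
    ∫ ω, c a ω / p * (c b ω / p) ∂μ = 1 + if a = b then (1 - p) / p else 0 := by
  have hmean (i : ι) : ∫ ω, c i ω / p ∂μ = 1 :=
    integral_div_eq_one_of_bernoulli (hc i) (h01 i) hp (hber i)
  split_ifs with hab
  · subst hab
    have hsq (ω : Ω) : c a ω / p * (c a ω / p) = c a ω / p / p := by
      rcases h01 a ω with h | h <;> rw [h] <;> ring
    simp only [hsq, integral_div, hmean]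
    field_simp
    ring
  · have hind : IndepFun (fun ω => c a ω / p) (fun ω => c b ω / p) μ :=
      (hindep hab).comp (measurable_id.div_const p) (measurable_id.div_const p)
    rw [hind.integral_fun_mul_eq_mul_integral ((hc a).div_const p).aestronglyMeasurable
      ((hc b).div_const p).aestronglyMeasurable, hmean, hmean]
    ring

lemma integral_bernoulli_gain_apply [IsProbabilityMeasure μ] {κ ι : Type*} [Fintype κ]
    [Fintype ι] [DecidableEq ι] (A G : Matrix κ ι ℝ) {c : ι → Ω → ℝ} (hc : ∀ i, Measurable (c i))
    (h01 : ∀ i ω, c i ω = 0 ∨ c i ω = 1) {p : ℝ} (hp : 0 < p)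
    (hber : ∀ i, μ {ω | c i ω = 1} = ENNReal.ofReal p)
    (hindep : Pairwise fun a b => IndepFun (c a) (c b) μ) (a b : ι) :
    ∫ ω, ((A + G * diagonal fun i => c i ω / p)ᵀ * (A + G * diagonal fun i => c i ω / p)) a b ∂μ =
      ((A + G)ᵀ * (A + G) + ((1 - p) / p) • diagonal fun i => (Gᵀ * G) i i) a b := by
  refine integral_transpose_mul_self_add_mul_diagonal_apply A G _
    (measurable_pi_lambda _ fun i => (hc i).div_const p) ?_
    (fun i => integral_div_eq_one_of_bernoulli (hc i) (h01 i) hp (hber i))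
    (integral_div_mul_div_of_bernoulli hc h01 hp hber hindep) a b
  exact range_comp (fun (w : ι → ℝ) i => w i / p) _ ▸ (finite_range_of_zero_or_one h01).image _

end Integration

/-- For the closed-loop stochastic recursion
`x(k+1) = (A + B K C(k)) x(k)` with `C(k) = Diag(c₁(k)/p, …, cₙ(k)/p)` built from mutually
independent Bernoulli(`p`) random variables, setting
`f(p) := ‖(A+BK)ᵀ(A+BK) + ((1−p)/p)·Diag((BK)ᵀ(BK))‖₂`, if `f(p) < 1` then
`E[‖x(k)‖²] ≤ f(p)^k · ‖x₀‖²` for all `k`, and `E[‖x(k)‖²] → 0` (AMSS). -/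
theorem amss_of_f_lt_one
    {n m : ℕ} (A : Matrix (Fin n) (Fin n) ℝ) (B : Matrix (Fin n) (Fin m) ℝ)
    (K : Matrix (Fin m) (Fin n) ℝ)
    {Ω : Type*} [MeasurableSpace Ω] (μ : Measure Ω) [IsProbabilityMeasure μ]
    (p : ℝ) (hp : p ∈ Set.Ioc (0 : ℝ) 1)
    (c : ℕ → Fin n → Ω → ℝ)
    (hmeas : ∀ k i, Measurable (c k i))
    (h01 : ∀ k i ω, c k i ω = 0 ∨ c k i ω = 1)
    (hber : ∀ k i, μ {ω | c k i ω = 1} = ENNReal.ofReal p)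
    (hindep : iIndepFun
      (fun (ki : ℕ × Fin n) ω => c ki.1 ki.2 ω) μ)
    (hf : specNorm ((A + B * K)ᵀ * (A + B * K) + ((1 - p) / p) •
        Matrix.diagonal (fun i => ((B * K)ᵀ * (B * K)) i i)) < 1)
    (x₀ : Fin n → ℝ) (x : ℕ → Ω → Fin n → ℝ)
    (hx0 : ∀ ω, x 0 ω = x₀)
    (hxrec : ∀ k ω, x (k + 1) ω =
      (A + B * K * Matrix.diagonal (fun i => c k i ω / p)).mulVec (x k ω)) :
    (∀ k, (∫ ω, ∑ i, (x k ω i) ^ 2 ∂μ) ≤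
        specNorm ((A + B * K)ᵀ * (A + B * K) + ((1 - p) / p) •
          Matrix.diagonal (fun i => ((B * K)ᵀ * (B * K)) i i)) ^ k * ∑ i, (x₀ i) ^ 2) ∧
      Tendsto (fun k => ∫ ω, ∑ i, (x k ω i) ^ 2 ∂μ) atTop (nhds 0) := by
  set f := specNorm ((A + B * K)ᵀ * (A + B * K) + ((1 - p) / p) •
    Matrix.diagonal (fun i => ((B * K)ᵀ * (B * K)) i i))
  have hf0 : 0 ≤ f := norm_nonneg _
  let N (d : Fin n → ℝ) : Matrix (Fin n) (Fin n) ℝ := A + B * K * diagonal fun i => d i / p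
  let F (_ : ℕ) (d v : Fin n → ℝ) : Fin n → ℝ := N d *ᵥ v
  have hrec : ∀ k ω, x (k + 1) ω = F k (fun i => c k i ω) (x k ω) := hxrec
  have hF (k : ℕ) : Measurable fun q : (Fin n → ℝ) × (Fin n → ℝ) => F k q.1 q.2 :=
    (by fun_prop : Continuous fun q : (Fin n → ℝ) × (Fin n → ℝ) => N q.1 *ᵥ q.2).measurable
  have hrowfin (k : ℕ) := finite_range_of_zero_or_one (h01 k)
  have hstep (k : ℕ) : ∫ ω, ∑ i, x (k + 1) ω i ^ 2 ∂μ ≤ f * ∫ ω, ∑ i, x k ω i ^ 2 ∂μ := by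
    have hind : IndepFun (fun ω i => c k i ω) (x k) μ :=
      indepFun_of_recursion hmeas hindep hF hx0 hrec k
    have hx : Measurable (x k) := measurable_of_recursion hmeas hF hx0 hrec k
    have hxfin : (range (x k)).Finite := finite_range_of_recursion hrowfin hx0 hrec k
    have hmean := integral_bernoulli_gain_apply A (B * K) (hmeas k) (h01 k) hp.1 (hber k)
      fun a b hab => hindep.indepFun (i := (k, a)) (j := (k, b)) (by simpa using hab)
    have hN (a b : Fin n) : Measurable fun d => ((N d)ᵀ * N d) a b :=
      (by fun_prop : Continuous fun d => ((N d)ᵀ * N d) a b).measurable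
    simp only [hxrec]
    exact integral_sum_sq_mulVec_le hind (measurable_pi_lambda _ (hmeas k)) (hrowfin k) hx hxfin
      hN hmean
  have hbound (k : ℕ) : ∫ ω, ∑ i, x k ω i ^ 2 ∂μ ≤ f ^ k * ∑ i, x₀ i ^ 2 := by
    simpa [hx0] using le_geom (u := fun k => ∫ ω, ∑ i, x k ω i ^ 2 ∂μ) hf0 k fun j _ => hstep j
  refine ⟨hbound, squeeze_zero (fun k => integral_nonneg fun ω => by positivity) hbound ?_⟩
  have hlim := (tendsto_pow_atTop_nhds_zero_of_lt_one hf0 hf).mul_const (∑ i, x₀ i ^ 2)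
  rwa [zero_mul] at hlim
end

section
/- Let A ∈ ℝ^{n×n}, B ∈ ℝ^{n×m}, K ∈ ℝ^{m×n}, D := A + B K, L := B K, and for p ∈ (0,1] define f(p) := ‖Dᵀ D + ((1−p)/p) · Diag(Lᵀ L)‖₂ (spectral norm). If ‖A + B K‖₂ < 1 (equivalently, the spectral radius of (A+BK)ᵀ(A+BK) is strictly less than 1), then there exists p ∈ (0,1) such that f(p) < 1. -/
/-!
Since `‖DᵀD‖₂ = ‖D‖₂² < 1` and the weight `(1 - p) / p` tends to `0` as `p → 1⁻`, continuity
of the norm makes `f(p) < 1` for every `p < 1` close enough to `1`; the diagonal term plays no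
role beyond being a fixed matrix.
-/

open Matrix

open Filter Topology

open scoped Matrix.Norms.L2Operator

lemma specNorm_eq {n : ℕ} (M : Matrix (Fin n) (Fin n) ℝ) : specNorm M = ‖M‖ :=
  (Matrix.l2_opNorm_def M).symm

lemma Matrix.l2_opNorm_transpose_mul_self {m n : Type*} [Fintype m] [Fintype n]
    [DecidableEq n] (M : Matrix m n ℝ) : ‖Mᵀ * M‖ = ‖M‖ * ‖M‖ := by
  rw [← conjTranspose_eq_transpose_of_trivial, l2_opNorm_conjTranspose_mul_self]

lemma eventually_norm_add_smul_lt {E : Type*} [SeminormedAddCommGroup E] [NormedSpace ℝ E]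
    {x : E} {r : ℝ} (hx : ‖x‖ < r) (y : E) : ∀ᶠ c in 𝓝 (0 : ℝ), ‖x + c • y‖ < r := by
  have hcont : Tendsto (fun c : ℝ => x + c • y) (𝓝 0) (𝓝 x) := by
    simpa using ((tendsto_id (x := 𝓝 (0 : ℝ))).smul_const y).const_add x
  exact hcont.norm.eventually_lt_const hx

lemma tendsto_one_sub_div_self_nhdsLT_one :
    Tendsto (fun p : ℝ => (1 - p) / p) (𝓝[<] 1) (𝓝 0) := by
  have h : Tendsto (fun p : ℝ => (1 - p) / p) (𝓝 1) (𝓝 ((1 - 1) / 1)) :=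
    ((continuous_const.sub continuous_id).tendsto 1).div (continuous_id.tendsto 1) one_ne_zero
  simpa using h.mono_left nhdsWithin_le_nhds

/-- With `D := A + B K`, `L := B K` and
`f(p) := ‖Dᵀ D + ((1−p)/p)·Diag(Lᵀ L)‖₂`, if `‖A + B K‖₂ < 1` then there exists
`p ∈ (0,1)` with `f(p) < 1`. -/
theorem exists_p_f_lt_one
    {n m : ℕ} (A : Matrix (Fin n) (Fin n) ℝ) (B : Matrix (Fin n) (Fin m) ℝ)
    (K : Matrix (Fin m) (Fin n) ℝ)
    (h : specNorm (A + B * K) < 1) :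
    ∃ p ∈ Set.Ioo (0 : ℝ) 1,
      specNorm ((A + B * K)ᵀ * (A + B * K) + ((1 - p) / p) •
        Matrix.diagonal (fun i => ((B * K)ᵀ * (B * K)) i i)) < 1 := by
  simp only [specNorm_eq] at h ⊢
  have hDD : ‖(A + B * K)ᵀ * (A + B * K)‖ < 1 := by
    rw [l2_opNorm_transpose_mul_self]
    nlinarith [norm_nonneg (A + B * K)]
  have hsmall := tendsto_one_sub_div_self_nhdsLT_one.eventually
    (eventually_norm_add_smul_lt hDD (diagonal fun i => ((B * K)ᵀ * (B * K)) i i))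
  have hIoo : ∀ᶠ p in 𝓝[<] (1 : ℝ), p ∈ Set.Ioo 0 1 := Ioo_mem_nhdsLT one_pos
  exact (hIoo.and hsmall).exists
end

section
/- Consider the closed-loop stochastic recursion x(k+1) = (A + B K C(k)) x(k) with deterministic initial condition x(0) = x₀ ∈ ℝⁿ, where C(k) = Diag(c₁(k)/p, …, cₙ(k)/p) and the family (cᵢ(k))_{k∈ℕ, 1≤i≤n} consists of mutually independent Bernoulli random variables each with parameter p ∈ (0,1]. Let D := A + B K, L := B K, sᵢ := Σ_{k=1}^{n} L_{k,i}², and s_max := max(s₁,…,sₙ). Assume ‖D‖₂ < 1 and s_max > 0, and assume p > 1/(1 + (1 − ‖D‖₂²)/s_max). Then the closed-loop system is asymptotically mean-square stable: E[‖x(k)‖²] → 0 as k → ∞ for every initial condition x₀ ∈ ℝⁿ. -/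
/-!
With `D = A + B K`, `L = B K` and `dᵢ(k) = cᵢ(k)/p - 1`, the recursion reads
`x(k+1) = (D + L Diag d(k)) x(k)`. The noise `d(k)` has mean zero and covariance `((1-p)/p) I`,
and it is independent of `x(k)`, which is a measurable function of the noise at earlier times.
Independence factors the second moment, `E‖M y‖² = Σᵢⱼ E[MᵀM]ᵢⱼ E[yᵢ yⱼ]`, and
`E[MᵀM] = DᵀD + ((1-p)/p) Diag(LᵀL)`. Hence
`E‖x(k+1)‖² ≤ (‖D‖₂² + ((1-p)/p) s_max) E‖x(k)‖²`, and the hypothesis on `p` says exactly that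
this factor is `< 1`.
-/

open MeasureTheory ProbabilityTheory Matrix Filter

namespace Matrix

variable {n : ℕ}

theorem sum_sq_mulVec_eq (M : Matrix (Fin n) (Fin n) ℝ) (v : Fin n → ℝ) :
    ∑ r, (M *ᵥ v) r ^ 2 = ∑ i, ∑ j, (Mᵀ * M) i j * (v i * v j) := by
  calc ∑ r, (M *ᵥ v) r ^ 2 = ∑ r, ∑ i, ∑ j, M r i * M r j * (v i * v j) := by
        refine Finset.sum_congr rfl fun r _ => ?_
        simp only [sq, mulVec, dotProduct, Finset.sum_mul_sum]
        exact Finset.sum_congr rfl fun i _ => Finset.sum_congr rfl fun j _ => by ring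
    _ = ∑ i, ∑ j, (Mᵀ * M) i j * (v i * v j) := by
        simp only [mul_apply, transpose_apply, Finset.sum_mul]
        rw [Finset.sum_comm]
        exact Finset.sum_congr rfl fun i _ => Finset.sum_comm

theorem gram_add_mul_diagonal_apply (D L : Matrix (Fin n) (Fin n) ℝ) (w : Fin n → ℝ)
    (i j : Fin n) :
    ((D + L * diagonal w)ᵀ * (D + L * diagonal w)) i j =
      (Dᵀ * D) i j + (Dᵀ * L) i j * w j + (Lᵀ * D) i j * w i + (Lᵀ * L) i j * (w i * w j) := by
  rw [mul_apply]
  simp only [transpose_apply, add_apply, mul_diagonal]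
  simp only [mul_apply, transpose_apply, Finset.sum_mul, ← Finset.sum_add_distrib]
  exact Finset.sum_congr rfl fun r _ => by ring

theorem sum_sq_mulVec_le_specNorm_sq (M : Matrix (Fin n) (Fin n) ℝ) (v : Fin n → ℝ) :
    ∑ r, (M *ᵥ v) r ^ 2 ≤ specNorm M ^ 2 * ∑ i, v i ^ 2 := by
  have h := (LinearMap.toContinuousLinearMap (toEuclideanLin M)).le_opNorm (WithLp.toLp 2 v)
  have hsq := pow_le_pow_left₀ (norm_nonneg _) h 2
  simpa [mul_pow, EuclideanSpace.norm_sq_eq, specNorm] using hsq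

end Matrix

section SecondMoments

variable {Ω : Type*} [MeasurableSpace Ω] {μ : Measure Ω} {n : ℕ}

theorem integral_sum_sq_mulVec_of_indepFun {M : Ω → Matrix (Fin n) (Fin n) ℝ}
    {y : Ω → Fin n → ℝ} (hind : IndepFun (fun ω i j => M ω i j) y μ)
    (hM : ∀ i j, Integrable (fun ω => ((M ω)ᵀ * M ω) i j) μ)
    (hy : ∀ i j, Integrable (fun ω => y ω i * y ω j) μ) :
    ∫ ω, ∑ r, (M ω *ᵥ y ω) r ^ 2 ∂μ =
      ∑ i, ∑ j, (∫ ω, ((M ω)ᵀ * M ω) i j ∂μ) * ∫ ω, y ω i * y ω j ∂μ := by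
  have hfactor (i j : Fin n) :
      IndepFun (fun ω => ((M ω)ᵀ * M ω) i j) (fun ω => y ω i * y ω j) μ :=
    hind.comp (φ := fun N : Fin n → Fin n → ℝ => ∑ r, N r i * N r j)
      (ψ := fun v : Fin n → ℝ => v i * v j) (by fun_prop) (by fun_prop)
  have hint (i j : Fin n) :
      Integrable (fun ω => ((M ω)ᵀ * M ω) i j * (y ω i * y ω j)) μ :=
    (hfactor i j).integrable_mul (hM i j) (hy i j)
  simp_rw [sum_sq_mulVec_eq]
  rw [integral_finsetSum _ fun i _ => integrable_finsetSum _ fun j _ => hint i j]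
  refine Finset.sum_congr rfl fun i _ => ?_
  rw [integral_finsetSum _ fun j _ => hint i j]
  exact Finset.sum_congr rfl fun j _ => (hfactor i j).integral_mul_eq_mul_integral
    (hM i j).aestronglyMeasurable (hy i j).aestronglyMeasurable

theorem integrable_gram_add_mul_diagonal [IsFiniteMeasure μ] (D L : Matrix (Fin n) (Fin n) ℝ)
    {d : Ω → Fin n → ℝ} (hd : ∀ i, MemLp (fun ω => d ω i) 2 μ) (i j : Fin n) :
    Integrable (fun ω => ((D + L * diagonal (d ω))ᵀ * (D + L * diagonal (d ω))) i j) μ := by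
  have hd₁ (i : Fin n) : Integrable (fun ω => d ω i) μ := (hd i).integrable one_le_two
  simp_rw [gram_add_mul_diagonal_apply]
  exact (((integrable_const _).add ((hd₁ j).const_mul _)).add ((hd₁ i).const_mul _)).add
    (((hd i).integrable_mul (hd j)).const_mul _)

theorem integral_gram_add_mul_diagonal [IsProbabilityMeasure μ] (D L : Matrix (Fin n) (Fin n) ℝ)
    {d : Ω → Fin n → ℝ} (hd : ∀ i, MemLp (fun ω => d ω i) 2 μ)
    (hmean : ∀ i, ∫ ω, d ω i ∂μ = 0) {v : ℝ}
    (hcov : ∀ i j, ∫ ω, d ω i * d ω j ∂μ = if i = j then v else 0) (i j : Fin n) :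
    ∫ ω, ((D + L * diagonal (d ω))ᵀ * (D + L * diagonal (d ω))) i j ∂μ =
      (Dᵀ * D + v • diagonal fun i => (Lᵀ * L) i i) i j := by
  have hd₁ (i : Fin n) : Integrable (fun ω => d ω i) μ := (hd i).integrable one_le_two
  have h₁ : Integrable (fun ω => (Dᵀ * D) i j + (Dᵀ * L) i j * d ω j) μ :=
    (integrable_const _).add ((hd₁ j).const_mul _)
  have h₂ : Integrable
      (fun ω => (Dᵀ * D) i j + (Dᵀ * L) i j * d ω j + (Lᵀ * D) i j * d ω i) μ :=
    h₁.add ((hd₁ i).const_mul _)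
  have hdd : Integrable (fun ω => d ω i * d ω j) μ := (hd i).integrable_mul (hd j)
  simp_rw [gram_add_mul_diagonal_apply]
  rw [integral_add h₂ (hdd.const_mul _),
    integral_add h₁ ((hd₁ i).const_mul _), integral_add (integrable_const _) ((hd₁ j).const_mul _)]
  simp only [integral_const, probReal_univ, one_smul, integral_const_mul, hmean, hcov]
  by_cases hij : i = j
  · subst hij; simp [mul_comm]
  · simp [hij]

theorem integral_sum_sq_mulVec_add_mul_diagonal_le [IsProbabilityMeasure μ]
    (D L : Matrix (Fin n) (Fin n) ℝ) {d y : Ω → Fin n → ℝ} (hind : IndepFun d y μ)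
    (hd : ∀ i, MemLp (fun ω => d ω i) 2 μ) (hy : ∀ i, MemLp (fun ω => y ω i) 2 μ)
    (hmean : ∀ i, ∫ ω, d ω i ∂μ = 0) {v : ℝ}
    (hcov : ∀ i j, ∫ ω, d ω i * d ω j ∂μ = if i = j then v else 0) (hv : 0 ≤ v) {s : ℝ}
    (hs : ∀ i, ∑ r, L r i ^ 2 ≤ s) :
    ∫ ω, ∑ r, ((D + L * diagonal (d ω)) *ᵥ y ω) r ^ 2 ∂μ ≤
      (specNorm D ^ 2 + v * s) * ∫ ω, ∑ i, y ω i ^ 2 ∂μ := by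
  have hyy (i j : Fin n) : Integrable (fun ω => y ω i * y ω j) μ := (hy i).integrable_mul (hy j)
  have hindM : IndepFun (fun ω i j => (D + L * diagonal (d ω)) i j) y μ :=
    hind.comp (φ := fun w i j => (D + L * diagonal w) i j)
      (measurable_pi_lambda _ fun i => measurable_pi_lambda _ fun j => by
        simp only [Matrix.add_apply, mul_diagonal]; fun_prop) measurable_id
  have hDy : ∫ ω, ∑ r, (D *ᵥ y ω) r ^ 2 ∂μ = ∑ i, ∑ j, (Dᵀ * D) i j * ∫ ω, y ω i * y ω j ∂μ := by
    simpa using integral_sum_sq_mulVec_of_indepFun (M := fun _ => D)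
      (indepFun_const_left _ _) (fun _ _ => integrable_const _) hyy
  have hy2 : ∫ ω, ∑ i, y ω i ^ 2 ∂μ = ∑ i, ∫ ω, y ω i * y ω i ∂μ := by
    simp_rw [integral_finsetSum _ fun i _ => (hy i).integrable_sq, sq]
  rw [integral_sum_sq_mulVec_of_indepFun hindM (integrable_gram_add_mul_diagonal D L hd) hyy]
  simp_rw [integral_gram_add_mul_diagonal D L hd hmean hcov]
  calc ∑ i, ∑ j, (Dᵀ * D + v • diagonal fun i => (Lᵀ * L) i i) i j * ∫ ω, y ω i * y ω j ∂μ
      = ∫ ω, ∑ r, (D *ᵥ y ω) r ^ 2 ∂μ + v * ∑ i, (Lᵀ * L) i i * ∫ ω, y ω i * y ω i ∂μ := by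
        simp [hDy, add_mul, Finset.sum_add_distrib, diagonal_apply, Finset.mul_sum, mul_assoc]
    _ ≤ specNorm D ^ 2 * ∫ ω, ∑ i, y ω i ^ 2 ∂μ + v * (s * ∫ ω, ∑ i, y ω i ^ 2 ∂μ) := by
        gcongr
        · calc ∫ ω, ∑ r, (D *ᵥ y ω) r ^ 2 ∂μ ≤ ∫ ω, specNorm D ^ 2 * ∑ i, y ω i ^ 2 ∂μ :=
                integral_mono_of_nonneg (ae_of_all _ fun ω => by positivity)
                  ((integrable_finsetSum _ fun i _ => (hy i).integrable_sq).const_mul _)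
                  (ae_of_all _ fun ω => sum_sq_mulVec_le_specNorm_sq D (y ω))
            _ = specNorm D ^ 2 * ∫ ω, ∑ i, y ω i ^ 2 ∂μ := integral_const_mul _ _
        · rw [hy2, Finset.mul_sum]
          gcongr with i
          · exact integral_nonneg fun ω => mul_self_nonneg _
          · simpa [mul_apply, sq] using hs i
    _ = (specNorm D ^ 2 + v * s) * ∫ ω, ∑ i, y ω i ^ 2 ∂μ := by ring

theorem memLp_top_mulVec {M : Ω → Matrix (Fin n) (Fin n) ℝ} {y : Ω → Fin n → ℝ}
    (hM : ∀ i j, MemLp (fun ω => M ω i j) ⊤ μ) (hy : ∀ j, MemLp (fun ω => y ω j) ⊤ μ)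
    (i : Fin n) : MemLp (fun ω => (M ω *ᵥ y ω) i) ⊤ μ := by
  simp only [mulVec, dotProduct]
  exact memLp_finsetSum _ fun j _ => (hy j).mul (hM i j)

end SecondMoments

section Bernoulli

variable {Ω : Type*} [MeasurableSpace Ω] {μ : Measure Ω} [IsProbabilityMeasure μ] {p : ℝ}

theorem integral_comp_of_zero_one {f : Ω → ℝ} (hf : Measurable f)
    (h01 : ∀ ω, f ω = 0 ∨ f ω = 1) (hp : 0 ≤ p) (hber : μ {ω | f ω = 1} = ENNReal.ofReal p)
    (g : ℝ → ℝ) : ∫ ω, g (f ω) ∂μ = p * g 1 + (1 - p) * g 0 := by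
  have hset : MeasurableSet {ω | f ω = 1} := hf (measurableSet_singleton 1)
  have hindicator : f = {ω | f ω = 1}.indicator 1 := funext fun ω => by
    rcases h01 ω with h | h <;> simp [h]
  have hint : Integrable f μ := hindicator ▸ (integrable_const 1).indicator hset
  have hmean : ∫ ω, f ω ∂μ = p := by
    rw [hindicator, integral_indicator_one hset, measureReal_def, hber, ENNReal.toReal_ofReal hp]
  have haffine (ω : Ω) : g (f ω) = g 0 + (g 1 - g 0) * f ω := by
    rcases h01 ω with h | h <;> simp [h]
  simp_rw [haffine]
  rw [integral_add (integrable_const _) (hint.const_mul _), integral_const, integral_const_mul,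
    hmean, probReal_univ, one_smul]
  ring

theorem integral_div_sub_one_of_zero_one {f : Ω → ℝ} (hf : Measurable f)
    (h01 : ∀ ω, f ω = 0 ∨ f ω = 1) (hp : 0 < p) (hber : μ {ω | f ω = 1} = ENNReal.ofReal p) :
    ∫ ω, (f ω / p - 1) ∂μ = 0 := by
  rw [integral_comp_of_zero_one hf h01 hp.le hber (fun t => t / p - 1)]
  field_simp
  ring

theorem integral_div_sub_one_mul_of_zero_one {ι : Type*} [DecidableEq ι] {f : ι → Ω → ℝ}
    (hf : ∀ i, Measurable (f i)) (h01 : ∀ i ω, f i ω = 0 ∨ f i ω = 1) (hp : 0 < p)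
    (hber : ∀ i, μ {ω | f i ω = 1} = ENNReal.ofReal p)
    (hind : Pairwise fun i j => IndepFun (f i) (f j) μ) (i j : ι) :
    ∫ ω, (f i ω / p - 1) * (f j ω / p - 1) ∂μ = if i = j then (1 - p) / p else 0 := by
  split_ifs with hij
  · subst hij
    rw [integral_comp_of_zero_one (hf i) (h01 i) hp.le (hber i) fun t => (t / p - 1) * (t / p - 1)]
    field_simp
    ring
  · have hmeas : Measurable fun t : ℝ => t / p - 1 := by fun_prop
    have hmean (i : ι) := integral_div_sub_one_of_zero_one (hf i) (h01 i) hp (hber i)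
    refine (((hind hij).comp hmeas hmeas).integral_mul_eq_mul_integral
      (hmeas.comp (hf i)).aestronglyMeasurable (hmeas.comp (hf j)).aestronglyMeasurable).trans ?_
    simp [hmean]

end Bernoulli

section NoiseHistory

variable {Ω ι β γ : Type*} [MeasurableSpace β] [MeasurableSpace γ]

abbrev noiseBefore (ξ : ℕ × ι → Ω → β) (k : ℕ) : MeasurableSpace Ω :=
  ⨆ s ∈ {s : ℕ × ι | s.1 < k}, MeasurableSpace.comap (ξ s) ‹_›

theorem noiseBefore_mono (ξ : ℕ × ι → Ω → β) : Monotone (noiseBefore ξ) :=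
  fun _ _ hkl => biSup_mono fun _ hs => lt_of_lt_of_le hs hkl

theorem measurable_noise_biSup (ξ : ℕ × ι → Ω → β) {S : Set (ℕ × ι)} {k : ℕ}
    (hS : ∀ i, (k, i) ∈ S) :
    Measurable[⨆ s ∈ S, MeasurableSpace.comap (ξ s) ‹_›] fun ω i => ξ (k, i) ω :=
  @measurable_pi_lambda _ _ _ (_) _ _ fun i =>
    Measurable.of_comap_le (le_biSup (fun s => MeasurableSpace.comap (ξ s) ‹_›) (hS i))

theorem measurable_noiseBefore_of_recursion {ξ : ℕ × ι → Ω → β} {F : ℕ → (ι → β) → γ → γ}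
    (hF : ∀ k, Measurable (Function.uncurry (F k))) {x : ℕ → Ω → γ} {x₀ : γ}
    (hx0 : ∀ ω, x 0 ω = x₀) (hrec : ∀ k ω, x (k + 1) ω = F k (fun i => ξ (k, i) ω) (x k ω))
    (k : ℕ) : Measurable[noiseBefore ξ k] (x k) := by
  induction k with
  | zero =>
    rw [funext hx0]
    exact measurable_const
  | succ k ih =>
    rw [funext (hrec k)]
    exact (hF k).comp ((measurable_noise_biSup ξ fun _ => k.lt_succ_self).prodMk
      (ih.mono (noiseBefore_mono ξ k.le_succ) le_rfl))

theorem indepFun_noise_of_measurable_noiseBefore [MeasurableSpace Ω] {μ : Measure Ω}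
    {ξ : ℕ × ι → Ω → β} (hξ : ∀ s, Measurable (ξ s)) (hind : iIndepFun ξ μ) {k : ℕ}
    {X : Ω → γ} (hX : Measurable[noiseBefore ξ k] X) :
    IndepFun X (fun ω i => ξ (k, i) ω) μ := by
  have hdisj : Disjoint {s : ℕ × ι | s.1 < k} {s | s.1 = k} :=
    Set.disjoint_left.2 fun s hs ht => (ne_of_lt hs) ht
  rw [IndepFun_iff_Indep]
  exact indep_of_indep_of_le_right
    (indep_of_indep_of_le_left (indep_iSup_of_disjoint (fun s => (hξ s).comap_le) hind.iIndep hdisj)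
      hX.comap_le)
    (measurable_noise_biSup ξ fun _ => rfl).comap_le

end NoiseHistory

section ClosedLoop

variable {n m : ℕ} (A : Matrix (Fin n) (Fin n) ℝ) (B : Matrix (Fin n) (Fin m) ℝ)
  (K : Matrix (Fin m) (Fin n) ℝ) {Ω : Type*} [MeasurableSpace Ω] {μ : Measure Ω} {p : ℝ}
  {c : ℕ → Fin n → Ω → ℝ} {x₀ : Fin n → ℝ} {x : ℕ → Ω → Fin n → ℝ}

theorem memLp_top_noise [IsFiniteMeasure μ] (hmeas : ∀ k i, Measurable (c k i))
    (h01 : ∀ k i ω, c k i ω = 0 ∨ c k i ω = 1) (k : ℕ) (i : Fin n) : MemLp (c k i) ⊤ μ :=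
  memLp_top_of_bound (hmeas k i).aestronglyMeasurable 1 (ae_of_all _ fun ω => by
    rcases h01 k i ω with h | h <;> simp [h])

theorem memLp_top_state [IsFiniteMeasure μ] (hmeas : ∀ k i, Measurable (c k i))
    (h01 : ∀ k i ω, c k i ω = 0 ∨ c k i ω = 1) (hx0 : ∀ ω, x 0 ω = x₀)
    (hxrec : ∀ k ω, x (k + 1) ω =
      (A + B * K * Matrix.diagonal (fun i => c k i ω / p)).mulVec (x k ω)) (k : ℕ) (i : Fin n) :
    MemLp (fun ω => x k ω i) ⊤ μ := by
  induction k generalizing i with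
  | zero => simpa [hx0] using memLp_const (x₀ i)
  | succ k ih =>
    simp_rw [hxrec]
    refine memLp_top_mulVec (fun r j => ?_) ih i
    simp only [Matrix.add_apply, mul_diagonal, div_eq_inv_mul]
    exact (memLp_const (A r j)).add
      (((memLp_top_noise hmeas h01 k j).const_mul p⁻¹).const_mul ((B * K) r j))

theorem integral_sum_sq_state_succ_le [IsProbabilityMeasure μ] (hp : p ∈ Set.Ioc (0 : ℝ) 1)
    (hmeas : ∀ k i, Measurable (c k i)) (h01 : ∀ k i ω, c k i ω = 0 ∨ c k i ω = 1)
    (hber : ∀ k i, μ {ω | c k i ω = 1} = ENNReal.ofReal p)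
    (hindep : iIndepFun (fun (ki : ℕ × Fin n) ω => c ki.1 ki.2 ω) μ) {s : ℝ}
    (hs : ∀ i, ∑ r, ((B * K) r i) ^ 2 ≤ s) (hx0 : ∀ ω, x 0 ω = x₀)
    (hxrec : ∀ k ω, x (k + 1) ω =
      (A + B * K * Matrix.diagonal (fun i => c k i ω / p)).mulVec (x k ω)) (k : ℕ) :
    ∫ ω, ∑ i, (x (k + 1) ω i) ^ 2 ∂μ ≤
      (specNorm (A + B * K) ^ 2 + (1 - p) / p * s) * ∫ ω, ∑ i, (x k ω i) ^ 2 ∂μ := by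
  obtain ⟨hp0, hp1⟩ := hp
  set d : Ω → Fin n → ℝ := fun ω i => c k i ω / p - 1 with hd_def
  have hstep (ω : Ω) : x (k + 1) ω = (A + B * K + B * K * diagonal (d ω)) *ᵥ x k ω := by
    rw [hxrec]
    congr 1
    ext i j
    simp only [Matrix.add_apply, mul_diagonal, hd_def]
    ring
  have hindep_state : IndepFun d (x k) μ := by
    have hF : Measurable (Function.uncurry fun (w v : Fin n → ℝ) =>
        (A + B * K * diagonal (fun i => w i / p)) *ᵥ v) :=
      (Continuous.matrix_mulVec (by fun_prop) (by fun_prop)).measurable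
    have := indepFun_noise_of_measurable_noiseBefore (fun s => hmeas s.1 s.2) hindep
      (measurable_noiseBefore_of_recursion (ξ := fun s ω => c s.1 s.2 ω)
        (F := fun _ w v => (A + B * K * diagonal (fun i => w i / p)) *ᵥ v) (fun _ => hF) hx0
        hxrec k)
    exact (this.comp measurable_id (by fun_prop :
      Measurable fun w : Fin n → ℝ => fun i => w i / p - 1)).symm
  have hd (i : Fin n) : MemLp (fun ω => d ω i) 2 μ := by
    simp only [hd_def, div_eq_inv_mul]
    exact (((memLp_top_noise hmeas h01 k i).const_mul p⁻¹).sub (memLp_const 1)).mono_exponent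
      le_top
  have hy (i : Fin n) : MemLp (fun ω => x k ω i) 2 μ :=
    (memLp_top_state A B K hmeas h01 hx0 hxrec k i).mono_exponent le_top
  simp_rw [hstep]
  exact integral_sum_sq_mulVec_add_mul_diagonal_le _ _ hindep_state hd hy
    (fun i => integral_div_sub_one_of_zero_one (hmeas k i) (h01 k i) hp0 (hber k i))
    (integral_div_sub_one_mul_of_zero_one (hmeas k) (h01 k) hp0 (hber k)
      fun i j hij => hindep.indepFun (i := (k, i)) (j := (k, j)) (by simpa using hij))
    (div_nonneg (sub_nonneg.2 hp1) hp0.le) hs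

end ClosedLoop

theorem add_div_mul_lt_one_of_one_div_lt {a p s : ℝ} (ha : a < 1) (hp : 0 < p) (hs : 0 < s)
    (h : 1 / (1 + (1 - a) / s) < p) : a + (1 - p) / p * s < 1 := by
  have hQ : 0 < 1 + (1 - a) / s := by positivity
  rw [div_lt_iff₀ hQ] at h
  have hmul := mul_lt_mul_of_pos_right h hs
  rw [mul_add, add_mul, mul_div_assoc', div_mul_cancel₀ _ hs.ne'] at hmul
  have : (1 - p) / p * s < 1 - a := by
    rw [div_mul_eq_mul_div, div_lt_iff₀ hp]
    linarith
  linarith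

/-- For the closed-loop stochastic recursion
`x(k+1) = (A + B K C(k)) x(k)` with `C(k) = Diag(c₁(k)/p, …, cₙ(k)/p)` built from
mutually independent Bernoulli(`p`) random variables, with `D := A + B K`, `L := B K`,
`sᵢ := Σₖ L_{k,i}²`, `s_max := max(s₁,…,sₙ)`: if `‖D‖₂ < 1`, `s_max > 0` and
`p > 1/(1 + (1 − ‖D‖₂²)/s_max)`, then the closed-loop system is asymptotically
mean-square stable: `E[‖x(k)‖²] → 0` for every initial condition `x₀`. -/
theorem amss_of_p_gt
    {n m : ℕ} (A : Matrix (Fin n) (Fin n) ℝ) (B : Matrix (Fin n) (Fin m) ℝ)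
    (K : Matrix (Fin m) (Fin n) ℝ)
    {Ω : Type*} [MeasurableSpace Ω] (μ : Measure Ω) [IsProbabilityMeasure μ]
    (p : ℝ) (hp : p ∈ Set.Ioc (0 : ℝ) 1)
    (c : ℕ → Fin n → Ω → ℝ)
    (hmeas : ∀ k i, Measurable (c k i))
    (h01 : ∀ k i ω, c k i ω = 0 ∨ c k i ω = 1)
    (hber : ∀ k i, μ {ω | c k i ω = 1} = ENNReal.ofReal p)
    (hindep : iIndepFun
      (fun (ki : ℕ × Fin n) ω => c ki.1 ki.2 ω) μ)
    (smax : ℝ)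
    (hsmax : IsGreatest (Set.range fun i => ∑ k, ((B * K) k i) ^ 2) smax)
    (hD : specNorm (A + B * K) < 1) (hs : 0 < smax)
    (hpgt : p > 1 / (1 + (1 - specNorm (A + B * K) ^ 2) / smax))
    (x₀ : Fin n → ℝ) (x : ℕ → Ω → Fin n → ℝ)
    (hx0 : ∀ ω, x 0 ω = x₀)
    (hxrec : ∀ k ω, x (k + 1) ω =
      (A + B * K * Matrix.diagonal (fun i => c k i ω / p)).mulVec (x k ω)) :
    Tendsto (fun k => ∫ ω, ∑ i, (x k ω i) ^ 2 ∂μ) atTop (nhds 0) := by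
  set ρ := specNorm (A + B * K) ^ 2 + (1 - p) / p * smax
  have hρ0 : 0 ≤ ρ := by
    have : 0 ≤ (1 - p) / p := div_nonneg (sub_nonneg.2 hp.2) hp.1.le
    positivity
  have hρ1 : ρ < 1 :=
    add_div_mul_lt_one_of_one_div_lt (pow_lt_one₀ (norm_nonneg _) hD two_ne_zero) hp.1 hs hpgt
  have hstep (k : ℕ) := integral_sum_sq_state_succ_le A B K hp hmeas h01 hber hindep
    (fun i => hsmax.2 ⟨i, rfl⟩) hx0 hxrec k
  refine squeeze_zero (fun k => integral_nonneg fun ω => by positivity)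
    (fun k => le_geom (u := fun k => ∫ ω, ∑ i, (x k ω i) ^ 2 ∂μ) hρ0 k fun j _ => hstep j) ?_
  simpa using (tendsto_pow_atTop_nhds_zero_of_lt_one hρ0 hρ1).mul_const
    (∫ ω, ∑ i, (x 0 ω i) ^ 2 ∂μ)
end
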